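/- arXiv:1002.3897 — 2 statements merged into one kernel-verified Lean document; each statement's English description precedes it below -/
import Mathlib

section
/- Let n ≥ 2 be a natural number and let H, k, k', k'', r, r', r'' be real numbers with H ≠ 0 and r > 0. Set a = 2*r*r'*k' + (n-2)*k*k'^2 + (n-1)*k*r^2 - r^2*k'', b = (k'^2 + r'^2 - r*r'' + k*k'')*r^2 + 2*(n-3)*k*k'*r*r' - 2*(n-2)*k'^2*k^2, and c = k*(n-2)*(r*r' - k*k')^2. Suppose there is a nonempty open interval I of real numbers such that for all x in I, n^2*H^2*(x^2*r^2 + (k'*x + r*r' - k*k')^2)^3 = (a*x^3 + b*x^2 + c*x)^2. Then r*r' = k*k'. -/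
/-- Comparing degree-0 coefficients in the mean curvature equation for a sphere-foliated
CMC (`H ≠ 0`) hypersurface in the Riemannian product `ℍⁿ × ℝ` yields `r r' = k k'`. -/
theorem riemannian_cmc_coefficient_comparison (n : ℕ) (hn : 2 ≤ n)
    (H k k' k'' r r' r'' : ℝ) (hH : H ≠ 0) (hr : 0 < r)
    (a b c : ℝ)
    (ha : a = 2 * r * r' * k' + ((n : ℝ) - 2) * k * k' ^ 2 + ((n : ℝ) - 1) * k * r ^ 2
      - r ^ 2 * k'')
    (hb : b = (k' ^ 2 + r' ^ 2 - r * r'' + k * k'') * r ^ 2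
      + 2 * ((n : ℝ) - 3) * k * k' * r * r' - 2 * ((n : ℝ) - 2) * k' ^ 2 * k ^ 2)
    (hc : c = k * ((n : ℝ) - 2) * (r * r' - k * k') ^ 2)
    (lo hi : ℝ) (hlohi : lo < hi)
    (heq : ∀ x ∈ Set.Ioo lo hi,
      (n : ℝ) ^ 2 * H ^ 2 * (x ^ 2 * r ^ 2 + (k' * x + r * r' - k * k') ^ 2) ^ 3 =
        (a * x ^ 3 + b * x ^ 2 + c * x) ^ 2) :
    r * r' = k * k' := by
  set p : Polynomial ℝ := Polynomial.C ((n : ℝ) ^ 2 * H ^ 2) *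
    (Polynomial.X ^ 2 * Polynomial.C (r ^ 2)
      + (Polynomial.C k' * Polynomial.X + Polynomial.C (r * r' - k * k')) ^ 2) ^ 3 with hp
  set q : Polynomial ℝ := (Polynomial.C a * Polynomial.X ^ 3
      + Polynomial.C b * Polynomial.X ^ 2 + Polynomial.C c * Polynomial.X) ^ 2 with hq
  have hpq : p = q := by
    apply Polynomial.eq_of_infinite_eval_eq
    apply Set.Infinite.mono (s := Set.Ioo lo hi) _ (Set.Ioo_infinite hlohi)
    intro x hx
    have h := heq x hx
    simp only [Set.mem_setOf_eq, hp, hq, Polynomial.eval_mul, Polynomial.eval_pow,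
      Polynomial.eval_add, Polynomial.eval_sub, Polynomial.eval_C, Polynomial.eval_X]
    linear_combination h
  have h0 := congrArg (Polynomial.eval 0) hpq
  simp only [hp, hq, Polynomial.eval_mul, Polynomial.eval_pow, Polynomial.eval_add,
    Polynomial.eval_sub, Polynomial.eval_C, Polynomial.eval_X] at h0
  have hnH : (0:ℝ) < (n : ℝ) ^ 2 * H ^ 2 := by
    have h1 : (0:ℝ) < n := by exact_mod_cast Nat.lt_of_lt_of_le (by norm_num) hn
    positivity
  have h6 : (r * r' - k * k') ^ 6 = 0 := by
    have hle : (0:ℝ) ≤ (r * r' - k * k') ^ 6 := by positivity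
    nlinarith [h0]
  have := pow_eq_zero_iff (n := 6) (by norm_num) |>.mp h6
  linarith
end

section
/- Let n ≥ 2 be a natural number and let H, k, k', k'', r, r', r'' be real numbers with H ≠ 0 and r > 0. Set a = 2*r*r'*k' - (n-2)*k*k'^2 - (n-1)*k*r^2 + r^2*k'', b = (k'^2 + r'^2 - r*r'' + k*k'')*r^2 - 2*(n-1)*k*k'*r*r' + 2*(n-2)*k'^2*k^2, and c = -k*(n-2)*(r*r' - k*k')^2. Suppose there is a nonempty open interval I of real numbers such that for all x in I, n^2*H^2*(-x^2*r^2 + (k'*x + r*r' - k*k')^2)^3 = (a*x^3 + b*x^2 + c*x)^2. Then r*r' = k*k'. -/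
/-- Comparing degree-0 coefficients in the mean curvature equation for a spacelike
sphere-foliated CMC (`H ≠ 0`) hypersurface in the Lorentzian product `ℍⁿ × ℝ` yields
`r r' = k k'`. -/
theorem lorentzian_cmc_coefficient_comparison (n : ℕ) (hn : 2 ≤ n)
    (H k k' k'' r r' r'' : ℝ) (hH : H ≠ 0) (hr : 0 < r)
    (a b c : ℝ)
    (ha : a = 2 * r * r' * k' - ((n : ℝ) - 2) * k * k' ^ 2 - ((n : ℝ) - 1) * k * r ^ 2
      + r ^ 2 * k'')
    (hb : b = (k' ^ 2 + r' ^ 2 - r * r'' + k * k'') * r ^ 2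
      - 2 * ((n : ℝ) - 1) * k * k' * r * r' + 2 * ((n : ℝ) - 2) * k' ^ 2 * k ^ 2)
    (hc : c = -k * ((n : ℝ) - 2) * (r * r' - k * k') ^ 2)
    (lo hi : ℝ) (hlohi : lo < hi)
    (heq : ∀ x ∈ Set.Ioo lo hi,
      (n : ℝ) ^ 2 * H ^ 2 * (-x ^ 2 * r ^ 2 + (k' * x + r * r' - k * k') ^ 2) ^ 3 =
        (a * x ^ 3 + b * x ^ 2 + c * x) ^ 2) :
    r * r' = k * k' := by
  set P : Polynomial ℝ :=
    Polynomial.C ((n : ℝ) ^ 2 * H ^ 2) *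
      (Polynomial.C (-(r ^ 2)) * Polynomial.X ^ 2 +
        (Polynomial.C k' * Polynomial.X + Polynomial.C (r * r' - k * k')) ^ 2) ^ 3 -
    (Polynomial.C a * Polynomial.X ^ 3 + Polynomial.C b * Polynomial.X ^ 2 +
      Polynomial.C c * Polynomial.X) ^ 2 with hP
  have hroot : ∀ x ∈ Set.Ioo lo hi, P.IsRoot x := by
    intro x hx
    have h := heq x hx
    simp only [hP, Polynomial.IsRoot, Polynomial.eval_sub, Polynomial.eval_mul,
      Polynomial.eval_add, Polynomial.eval_pow, Polynomial.eval_C, Polynomial.eval_X]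
    linear_combination h
  have hPzero : P = 0 :=
    Polynomial.eq_zero_of_infinite_isRoot P
      ((Set.Ioo_infinite hlohi).mono fun x hx => hroot x hx)
  have h0 : P.eval 0 = 0 := by rw [hPzero]; simp
  have h0' : (n : ℝ) ^ 2 * H ^ 2 * (r * r' - k * k') ^ 6 = 0 := by
    simp only [hP, Polynomial.eval_sub, Polynomial.eval_mul, Polynomial.eval_add,
      Polynomial.eval_pow, Polynomial.eval_C, Polynomial.eval_X] at h0
    linarith [h0]
  have hn0 : (n : ℝ) ≠ 0 := by positivity
  have h6 : (r * r' - k * k') ^ 6 = 0 := by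
    have hne := mul_ne_zero (pow_ne_zero 2 hn0) (pow_ne_zero 2 hH)
    exact (mul_eq_zero.mp h0').resolve_left hne
  have := pow_eq_zero_iff (n := 6) (by norm_num) |>.mp h6
  linarith
end
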